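/- Let A be a unital C*-algebra, H a Hilbert space, π : A → B(H) a unital *-homomorphism, and (φₙ) a sequence of unital completely positive maps A → B(H) such that for all a ∈ A and all ξ, η ∈ H, ⟨(φₙ(a) − π(a))ξ, η⟩ → 0. Then for all a ∈ A and all ξ ∈ H, ‖(π(a) − φₙ(a))ξ‖ → 0; i.e., weak-operator convergence of (φₙ) to a *-homomorphism implies strong-operator convergence. -/

import Mathlib

open scoped InnerProductSpace

/-- A matrix over a star ring is "star positive" if it factors as `Nᴴ * N`.
In a C*-algebra `Mₙ(A)` this is exactly positivity. -/
def MatStarPos {R : Type*} [Ring R] [StarRing R] {n : ℕ}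
    (M : Matrix (Fin n) (Fin n) R) : Prop :=
  ∃ N : Matrix (Fin n) (Fin n) R, M = N.conjTranspose * N

/-- A unital completely positive map between complex star algebras. -/
structure IsUCP {A B : Type*} [Ring A] [StarRing A] [Algebra ℂ A]
    [Ring B] [StarRing B] [Algebra ℂ B] (φ : A → B) : Prop where
  linear : IsLinearMap ℂ φ
  unital : φ 1 = 1
  cp : ∀ (n : ℕ) (M : Matrix (Fin n) (Fin n) A), MatStarPos M → MatStarPos (M.map φ)


/-!
By the Kadison–Schwarz inequality `φₙ(a)* φₙ(a) ≤ φₙ(a* a)` and multiplicativity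
`π(a* a) = π(a)* π(a)`, the strong defect is dominated by matrix coefficients:
`‖(π a - φₙ a) ξ‖² ≤ Re ⟪(φₙ(a* a) - π(a* a)) ξ, ξ⟫ - 2 Re ⟪(φₙ a - π a) ξ, π a ξ⟫`,
and both terms on the right tend to `0` by weak operator convergence.
-/

open scoped ComplexOrder

theorem MatStarPos.isHermitian {R : Type*} [Ring R] [StarRing R] {n : ℕ}
    {M : Matrix (Fin n) (Fin n) R} (hM : MatStarPos M) : M.IsHermitian := by
  obtain ⟨N, rfl⟩ := hM
  exact N.isHermitian_conjTranspose_mul_self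

theorem matStarPos_fin_two {R : Type*} [Ring R] [StarRing R] (a : R) :
    MatStarPos !![1, a; star a, star a * a] :=
  ⟨!![1, a; 0, 0], by ext i j; fin_cases i <;> fin_cases j <;> simp [Matrix.mul_apply]⟩

section InnerProductSpace

variable {𝕜 E : Type*} [RCLike 𝕜] [NormedAddCommGroup E] [InnerProductSpace 𝕜 E] [CompleteSpace E]

theorem MatStarPos.inner_sum_nonneg {n : ℕ} {M : Matrix (Fin n) (Fin n) (E →L[𝕜] E)}
    (hM : MatStarPos M) (v : Fin n → E) :
    0 ≤ ∑ i, ∑ j, ⟪M i j (v j), v i⟫_𝕜 := by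
  obtain ⟨N, rfl⟩ := hM
  calc (0 : 𝕜) ≤ ∑ k, ⟪∑ j, N k j (v j), ∑ i, N k i (v i)⟫_𝕜 :=
        Finset.sum_nonneg fun k _ => by
          rw [← inner_self_ofReal_re]; exact RCLike.ofReal_nonneg.mpr inner_self_nonneg
    _ = ∑ k, ∑ i, ∑ j, ⟪N k j (v j), N k i (v i)⟫_𝕜 := by
        simp only [sum_inner, inner_sum]
    _ = ∑ i, ∑ j, ⟪(N.conjTranspose * N) i j (v j), v i⟫_𝕜 := by
        simp only [Matrix.mul_apply, Matrix.conjTranspose_apply, sum_apply,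
          mul_apply_eq_comp, sum_inner, ContinuousLinearMap.star_eq_adjoint,
          ContinuousLinearMap.adjoint_inner_left]
        rw [Finset.sum_comm]
        exact Finset.sum_congr rfl fun i _ => Finset.sum_comm

theorem norm_sub_apply_sq_le {S T Q : E →L[𝕜] E} (h : star S * S ≤ Q) (x : E) :
    ‖(T - S) x‖ ^ 2 ≤
      RCLike.re ⟪(Q - star T * T) x, x⟫_𝕜 - 2 * RCLike.re ⟪(S - T) x, T x⟫_𝕜 := by
  have norm_sq (A : E →L[𝕜] E) : ‖A x‖ ^ 2 = RCLike.re ⟪(star A * A) x, x⟫_𝕜 :=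
    A.apply_norm_sq_eq_inner_adjoint_left x
  have hS : ‖S x‖ ^ 2 ≤ RCLike.re ⟪Q x, x⟫_𝕜 := by
    simpa only [sub_apply, inner_sub_left, map_sub, sub_nonneg, ← norm_sq]
      using h.re_inner_nonneg_left x
  simp only [sub_apply, inner_sub_left, map_sub, ← norm_sq, inner_self_eq_norm_sq]
  rw [norm_sub_sq (𝕜 := 𝕜), inner_re_symm (𝕜 := 𝕜) (T x)]
  linarith

end InnerProductSpace

namespace IsUCP

theorem map_star {A B : Type*} [Ring A] [StarRing A] [Algebra ℂ A]
    [Ring B] [StarRing B] [Algebra ℂ B] {φ : A → B} (hφ : IsUCP φ) (a : A) :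
    φ (star a) = star (φ a) := by
  have h : star (φ (star a)) = φ a := (hφ.cp 2 _ (matStarPos_fin_two a)).isHermitian.apply 0 1
  rw [← h, star_star]

theorem star_mul_self_le {A H : Type*} [Ring A] [StarRing A] [Algebra ℂ A]
    [NormedAddCommGroup H] [InnerProductSpace ℂ H] [CompleteSpace H]
    {φ : A → (H →L[ℂ] H)} (hφ : IsUCP φ) (a : A) :
    star (φ a) * φ a ≤ φ (star a * a) := by
  rw [ContinuousLinearMap.le_def, ContinuousLinearMap.isPositive_iff_complex]
  intro x
  -- the quadratic form of the positive matrix `[φ 1, φ a; φ (a*), φ (a* a)]` at `(-φ a x, x)`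
  have h : 0 ≤ ⟪(φ (star a * a) - star (φ a) * φ a) x, x⟫_ℂ := by
    simpa [Fin.sum_univ_two, hφ.unital, hφ.map_star, inner_sub_left] using
      (hφ.cp 2 _ (matStarPos_fin_two a)).inner_sum_nonneg ![-(φ a x), x]
  exact ⟨(Complex.eq_re_of_ofReal_le (Complex.ofReal_zero ▸ h)).symm, (Complex.nonneg_iff.mp h).1⟩

end IsUCP

open Filter Topology

theorem stmt1 {A : Type*} [CStarAlgebra A]
    {H : Type*} [NormedAddCommGroup H] [InnerProductSpace ℂ H] [CompleteSpace H]
    (π : A →⋆ₐ[ℂ] (H →L[ℂ] H)) (φ : ℕ → A → (H →L[ℂ] H))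
    (hφ : ∀ n, IsUCP (φ n))
    (hWOT : ∀ (a : A) (ξ η : H),
      Filter.Tendsto (fun n => ⟪(φ n a - π a) ξ, η⟫_ℂ) Filter.atTop (nhds 0)) :
    ∀ (a : A) (ξ : H),
      Filter.Tendsto (fun n => ‖(π a - φ n a) ξ‖) Filter.atTop (nhds 0) := by
  intro a ξ
  have bound : ∀ n, ‖(π a - φ n a) ξ‖ ^ 2 ≤ RCLike.re ⟪(φ n (star a * a) - π (star a * a)) ξ, ξ⟫_ℂ
      - 2 * RCLike.re ⟪(φ n a - π a) ξ, π a ξ⟫_ℂ := fun n => by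
    simpa only [map_mul, map_star] using
      norm_sub_apply_sq_le (T := π a) ((hφ n).star_mul_self_le a) ξ
  have re_lim := (RCLike.continuous_re (K := ℂ)).tendsto 0
  have bound_lim : Tendsto (fun n => RCLike.re ⟪(φ n (star a * a) - π (star a * a)) ξ, ξ⟫_ℂ
      - 2 * RCLike.re ⟪(φ n a - π a) ξ, π a ξ⟫_ℂ) atTop (𝓝 0) := by
    simpa only [Function.comp_def, map_zero, mul_zero, sub_zero] using
      (re_lim.comp (hWOT _ ξ ξ)).sub ((re_lim.comp (hWOT a ξ (π a ξ))).const_mul 2)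
  have sq_lim : Tendsto (fun n => ‖(π a - φ n a) ξ‖ ^ 2) atTop (𝓝 0) :=
    squeeze_zero (fun _ => by positivity) bound bound_lim
  simpa only [Real.sqrt_sq (norm_nonneg _), Real.sqrt_zero] using sq_lim.sqrt
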